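/- Let B_1,…,B_K ∈ ℝ^{N×M} be matrices such that 𝒪_N(C,A)·B_1, …, 𝒪_N(C,A)·B_K are linearly independent in ℝ^{NP×M}. Then there exist controls ε^1,…,ε^K ∈ L²((0,T);ℝ^M) such that Ŵ := Σ_{m=1}^K W(ε^m) ∈ ℝ^{K×K} is positive definite; consequently, for any α⋆ ∈ ℝ^K, the least-squares problem min_{α∈ℝ^K} Σ_{m=1}^K ‖C·φ_T(B(α⋆),ε^m) − C·φ_T(B(α),ε^m)‖₂² is uniquely solvable with α = α⋆. -/

import Mathlib

open MeasureTheory Matrix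

/-- Observation integral `γ(B,ε) = ∫_0^T C e^{(T-s)A} B ε(s) ds`. -/
noncomputable def gam {N M P : ℕ} (T : ℝ) (A : Matrix (Fin N) (Fin N) ℝ)
    (C : Matrix (Fin P) (Fin N) ℝ) (B : Matrix (Fin N) (Fin M) ℝ)
    (ε : ℝ → Fin M → ℝ) : Fin P → ℝ :=
  ∫ s in (0:ℝ)..T, (C * NormedSpace.exp ((T - s) • A) * B).mulVec (ε s)

/-- Final state `φ_T(B,ε) = e^{TA} φ₀ + ∫_0^T e^{(T-s)A} B ε(s) ds`. -/
noncomputable def phiT {N M : ℕ} (T : ℝ) (A : Matrix (Fin N) (Fin N) ℝ)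
    (φ₀ : Fin N → ℝ) (B : Matrix (Fin N) (Fin M) ℝ) (ε : ℝ → Fin M → ℝ) : Fin N → ℝ :=
  (NormedSpace.exp (T • A)).mulVec φ₀ +
    ∫ s in (0:ℝ)..T, (NormedSpace.exp ((T - s) • A) * B).mulVec (ε s)

/-- The matrix `W(ε)` with entries `⟨γ(B_ℓ,ε), γ(B_j,ε)⟩`. -/
noncomputable def Wmat {N M P K : ℕ} (T : ℝ) (A : Matrix (Fin N) (Fin N) ℝ)
    (C : Matrix (Fin P) (Fin N) ℝ) (Bs : Fin K → Matrix (Fin N) (Fin M) ℝ)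
    (ε : ℝ → Fin M → ℝ) : Matrix (Fin K) (Fin K) ℝ :=
  Matrix.of fun ℓ j => gam T A C (Bs ℓ) ε ⬝ᵥ gam T A C (Bs j) ε

/-- The observability matrix `𝒪_N(C,A)`. -/
def obsMat {N P : ℕ} (A : Matrix (Fin N) (Fin N) ℝ) (C : Matrix (Fin P) (Fin N) ℝ) :
    Matrix (Fin N × Fin P) (Fin N) ℝ :=
  Matrix.of fun jp i => (C * A ^ (jp.1 : ℕ)) jp.2 i

/-!
If `γ(B, ε)` vanished for every continuous control, testing with the control
`ε(t) = (C e^{(T-t)A} B)ᵀ w` would give `∫ ‖ε‖² = w ⬝ γ(B, ε) = 0`, hence `C e^{sA} B = 0` on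
`(0, T)`; differentiating there and letting `s → 0` gives `C Aᵏ B = 0` for all `k`, i.e.
`𝒪_N(C,A) B = 0`. By linear independence the kernels of `α ↦ γ(B(α), ε)` therefore intersect
trivially, and a dimension count picks `K` controls whose kernels already do. Stacking the
observations of these controls into one matrix `𝒢` gives `Ŵ = 𝒢ᵀ 𝒢` with `𝒢` injective, and the
least-squares residual at `α` is `(α⋆ - α)ᵀ Ŵ (α⋆ - α)`.
-/

open Set NormedSpace

section ExpVanishing

variable {𝔸 F : Type*} [NormedRing 𝔸] [NormedAlgebra ℝ 𝔸] [CompleteSpace 𝔸]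
  [NormedAddCommGroup F] [NormedSpace ℝ F]

lemma continuous_exp_smul (a : 𝔸) : Continuous fun s : ℝ => exp (s • a) :=
  continuous_iff_continuousAt.2 fun s => (hasDerivAt_exp_smul_const' a s).continuousAt

lemma apply_mul_exp_smul_eq_zero {U : Set ℝ} (hU : IsOpen U) (L : 𝔸 →L[ℝ] F) (a : 𝔸)
    (h : ∀ s ∈ U, L (exp (s • a)) = 0) : ∀ s ∈ U, L (a * exp (s • a)) = 0 := by
  intro s hs
  have hderiv : HasDerivAt (fun u : ℝ => L (exp (u • a))) (L (a * exp (s • a))) s :=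
    L.hasFDerivAt.comp_hasDerivAt s (hasDerivAt_exp_smul_const' a s)
  have hzero : HasDerivAt (fun u : ℝ => L (exp (u • a))) 0 s :=
    (hasDerivAt_const s 0).congr_of_eventuallyEq
      (Filter.eventually_of_mem (hU.mem_nhds hs) h)
  exact hderiv.unique hzero

lemma apply_pow_eq_zero_of_apply_exp_smul_eq_zero {T : ℝ} (hT : 0 < T) (L : 𝔸 →L[ℝ] F)
    (a : 𝔸) (h : ∀ s ∈ Ioo 0 T, L (exp (s • a)) = 0) (k : ℕ) : L (a ^ k) = 0 := by
  have hk : ∀ s ∈ Ioo 0 T, L (a ^ k * exp (s • a)) = 0 := by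
    induction k with
    | zero => simpa using h
    | succ k ih =>
      intro s hs
      simpa [pow_succ, mul_assoc] using apply_mul_exp_smul_eq_zero isOpen_Ioo
        (L.comp (ContinuousLinearMap.mul ℝ 𝔸 (a ^ k))) a (by simpa using ih) s hs
  have hcont : Continuous fun s : ℝ => L (a ^ k * exp (s • a)) :=
    L.continuous.comp (continuous_const.mul (continuous_exp_smul a))
  have h0 : (0 : ℝ) ∈ closure (Ioo 0 T) := by
    rw [closure_Ioo hT.ne]
    exact ⟨le_rfl, hT.le⟩
  simpa using Set.EqOn.closure hk hcont continuous_const h0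

end ExpVanishing

section Separation

variable {ι : Type*}

lemma iInf_comp_snoc {α : Type*} [CompleteLattice α] {n : ℕ} (p : ι → α) (g : Fin n → ι)
    (i : ι) : ⨅ m, p (Fin.snoc (α := fun _ => ι) g i m) = (⨅ m, p (g m)) ⊓ p i := by
  refine le_antisymm (le_inf (le_iInf fun m => ?_) ?_) (le_iInf fun m => ?_)
  · simpa using iInf_le (fun m => p (Fin.snoc (α := fun _ => ι) g i m)) m.castSucc
  · simpa using iInf_le (fun m => p (Fin.snoc (α := fun _ => ι) g i m)) (Fin.last n)
  · induction m using Fin.lastCases with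
    | last => simp
    | cast m => simpa using inf_le_left.trans (iInf_le _ m)

variable {K V : Type*} [DivisionRing K] [AddCommGroup V] [Module K V] [FiniteDimensional K V]

theorem Submodule.exists_fin_finrank_iInf_eq_bot [Nonempty ι] (p : ι → Submodule K V)
    (hp : ⨅ i, p i = ⊥) : ∃ g : Fin (Module.finrank K V) → ι, ⨅ m, p (g m) = ⊥ := by
  have hfinrank (n : ℕ) : ∃ g : Fin n → ι,
      Module.finrank K ↥(⨅ m, p (g m)) ≤ Module.finrank K V - n := by
    induction n with
    | zero => exact ⟨finZeroElim, by simpa using Submodule.finrank_le _⟩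
    | succ n ih =>
      obtain ⟨g, hg⟩ := ih
      by_cases hbot : ⨅ m, p (g m) = ⊥
      · refine ⟨Fin.snoc g (Classical.arbitrary ι), ?_⟩
        rw [iInf_comp_snoc, hbot, bot_inf_eq, finrank_bot]
        exact Nat.zero_le _
      · obtain ⟨x, hx, hx0⟩ := Submodule.exists_mem_ne_zero_of_ne_bot hbot
        obtain ⟨i, hxi⟩ : ∃ i, x ∉ p i := by
          by_contra! h
          exact hx0 (by simpa [hp] using (Submodule.mem_iInf p).2 h)
        refine ⟨Fin.snoc g i, ?_⟩
        have hlt : (⨅ m, p (g m)) ⊓ p i < ⨅ m, p (g m) :=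
          inf_le_left.lt_of_ne fun h => hxi (Submodule.mem_inf.1 (h.ge hx)).2
        have := Submodule.finrank_lt_finrank_of_lt hlt
        rw [iInf_comp_snoc]
        omega
  obtain ⟨g, hg⟩ := hfinrank (Module.finrank K V)
  exact ⟨g, Submodule.finrank_eq_zero.1 (by omega)⟩

end Separation

lemma Continuous.memLp_restrict_Ioc {E : Type*} [NormedAddCommGroup E] {f : ℝ → E}
    (hf : Continuous f) (p : ENNReal) (a b : ℝ) : MemLp f p (volume.restrict (Ioc a b)) := by
  obtain ⟨R, hR⟩ := (isCompact_Icc (a := a) (b := b)).exists_bound_of_continuousOn hf.continuousOn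
  exact MemLp.of_bound hf.aestronglyMeasurable R <| (ae_restrict_iff' measurableSet_Ioc).2 <|
    ae_of_all _ fun x hx => hR x (Ioc_subset_Icc_self hx)

-- Any norm inducing the product topology would do: it only gives access to the calculus of `exp`.
attribute [local instance] Matrix.linftyOpNormedAddCommGroup Matrix.linftyOpNormedSpace
  Matrix.linftyOpNormedRing Matrix.linftyOpNormedAlgebra

section Observability

variable {N M P : ℕ} (A : Matrix (Fin N) (Fin N) ℝ) (C : Matrix (Fin P) (Fin N) ℝ)
  (B : Matrix (Fin N) (Fin M) ℝ)

lemma mul_pow_mul_eq_zero_of_mul_exp_mul_eq_zero {T : ℝ} (hT : 0 < T)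
    (h : ∀ s ∈ Ioo 0 T, C * exp (s • A) * B = 0) (k : ℕ) : C * A ^ k * B = 0 :=
  apply_pow_eq_zero_of_apply_exp_smul_eq_zero hT
    (mulRightLinearMap (Fin P) ℝ B ∘ₗ mulLeftLinearMap (Fin N) ℝ C).toContinuousLinearMap A h k

lemma obsMat_mul_eq_zero (h : ∀ k : ℕ, C * A ^ k * B = 0) : obsMat A C * B = 0 := by
  ext ⟨j, p⟩ q
  simpa [obsMat, Matrix.mul_apply, Matrix.mul_assoc] using congrFun₂ (h j) p q

end Observability

section ObservationIntegral

variable {N M P : ℕ} (T : ℝ) (A : Matrix (Fin N) (Fin N) ℝ) (C : Matrix (Fin P) (Fin N) ℝ)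

lemma continuous_exp_sub_smul : Continuous fun s : ℝ => exp ((T - s) • A) :=
  (continuous_exp_smul A).comp (continuous_const.sub continuous_id)

lemma intervalIntegrable_gam_integrand (B : Matrix (Fin N) (Fin M) ℝ)
    (ε : C(ℝ, Fin M → ℝ)) :
    IntervalIntegrable (fun s => (C * exp ((T - s) • A) * B) *ᵥ ε s) volume 0 T :=
  (((continuous_const.matrix_mul (continuous_exp_sub_smul T A)).matrix_mul
    continuous_const).matrix_mulVec ε.continuous).intervalIntegrable 0 T

@[simps]
noncomputable def gamLinear (ε : C(ℝ, Fin M → ℝ)) :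
    Matrix (Fin N) (Fin M) ℝ →ₗ[ℝ] Fin P → ℝ where
  toFun B := gam T A C B ε
  map_add' B B' := by
    simp only [gam, Matrix.mul_add, Matrix.add_mulVec]
    exact intervalIntegral.integral_add (intervalIntegrable_gam_integrand T A C B ε)
      (intervalIntegrable_gam_integrand T A C B' ε)
  map_smul' c B := by
    simp only [gam, Matrix.mul_smul, Matrix.smul_mulVec, intervalIntegral.integral_smul,
      RingHom.id_apply]

lemma mulVec_phiT (φ₀ : Fin N → ℝ) (B : Matrix (Fin N) (Fin M) ℝ) (ε : C(ℝ, Fin M → ℝ)) :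
    C *ᵥ phiT T A φ₀ B ε = C *ᵥ (exp (T • A) *ᵥ φ₀) + gam T A C B ε := by
  have hint : IntervalIntegrable (fun s => (exp ((T - s) • A) * B) *ᵥ ε s) volume 0 T :=
    (((continuous_exp_sub_smul T A).matrix_mul continuous_const).matrix_mulVec
      ε.continuous).intervalIntegrable 0 T
  rw [phiT, mulVec_add, gam]
  congr 1
  simpa [mulVec_mulVec, Matrix.mul_assoc] using
    ((mulVecLin C).toContinuousLinearMap.intervalIntegral_comp_comm hint).symm

lemma dotProduct_gam_transpose (B : Matrix (Fin N) (Fin M) ℝ) (w : Fin P → ℝ) :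
    w ⬝ᵥ gam T A C B (fun s => (C * exp ((T - s) • A) * B)ᵀ *ᵥ w) =
      ∫ s in 0..T, ((C * exp ((T - s) • A) * B)ᵀ *ᵥ w) ⬝ᵥ ((C * exp ((T - s) • A) * B)ᵀ *ᵥ w) := by
  have hint := intervalIntegrable_gam_integrand T A C B
    ⟨fun s => (C * exp ((T - s) • A) * B)ᵀ *ᵥ w, by fun_prop⟩
  refine ((dotProductBilin ℝ ℝ w).toContinuousLinearMap.intervalIntegral_comp_comm hint).symm.trans
    (intervalIntegral.integral_congr fun s _ => ?_)
  simp only [LinearMap.coe_toContinuousLinearMap', dotProductBilin_apply_apply,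
    ContinuousMap.coe_mk]
  rw [dotProduct_mulVec, ← mulVec_transpose]

end ObservationIntegral

section Controllability

variable {N M P : ℕ} {T : ℝ} (A : Matrix (Fin N) (Fin N) ℝ) (C : Matrix (Fin P) (Fin N) ℝ)
  (B : Matrix (Fin N) (Fin M) ℝ)

lemma mul_exp_mul_eq_zero_of_forall_gam_eq_zero (hT : 0 < T)
    (h : ∀ ε : C(ℝ, Fin M → ℝ), gam T A C B ε = 0) : ∀ s ∈ Ioo 0 T, C * exp (s • A) * B = 0 := by
  intro s hs
  rw [← transpose_eq_zero, ext_iff_mulVec]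
  intro w
  by_contra hw
  let v : C(ℝ, Fin M → ℝ) := ⟨fun t => (C * exp ((T - t) • A) * B)ᵀ *ᵥ w, by fun_prop⟩
  have hvs : v (T - s) ≠ 0 := by simpa [v] using hw
  have hnonneg (u : Fin M → ℝ) : 0 ≤ u ⬝ᵥ u := Fintype.sum_nonneg fun i => mul_self_nonneg (u i)
  have hpos : 0 < ∫ t in 0..T, v t ⬝ᵥ v t :=
    intervalIntegral.integral_pos hT (by fun_prop) (fun t _ => hnonneg (v t))
      ⟨T - s, ⟨by linarith [hs.2], by linarith [hs.1]⟩,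
        (hnonneg _).lt_of_ne' (dotProduct_self_eq_zero.not.2 hvs)⟩
  have hgam : ∫ t in 0..T, v t ⬝ᵥ v t = w ⬝ᵥ gam T A C B v :=
    (dotProduct_gam_transpose T A C B w).symm
  rw [hgam, h v, dotProduct_zero] at hpos
  exact hpos.false

lemma exists_gam_ne_zero (hT : 0 < T) (hB : obsMat A C * B ≠ 0) :
    ∃ ε : C(ℝ, Fin M → ℝ), gam T A C B ε ≠ 0 := by
  by_contra! h
  exact hB <| obsMat_mul_eq_zero A C B <|
    mul_pow_mul_eq_zero_of_mul_exp_mul_eq_zero A C B hT <|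
    mul_exp_mul_eq_zero_of_forall_gam_eq_zero A C B hT h

end Controllability

section LeastSquares

variable {N M P K : ℕ} {ι : Type*} (T : ℝ) (A : Matrix (Fin N) (Fin N) ℝ)
  (C : Matrix (Fin P) (Fin N) ℝ) (Bs : Fin K → Matrix (Fin N) (Fin M) ℝ)

noncomputable def gamStack (εs : ι → ℝ → Fin M → ℝ) : Matrix (ι × Fin P) (Fin K) ℝ :=
  Matrix.of fun mp j => gam T A C (Bs j) (εs mp.1) mp.2

lemma sum_Wmat_eq_transpose_mul [Fintype ι] (εs : ι → ℝ → Fin M → ℝ) :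
    ∑ m, Wmat T A C Bs (εs m) = (gamStack T A C Bs εs)ᵀ * gamStack T A C Bs εs := by
  ext ℓ j
  simp [Wmat, gamStack, Matrix.mul_apply, Matrix.sum_apply, dotProduct, Fintype.sum_prod_type]

lemma gamStack_mulVec (εs : ι → C(ℝ, Fin M → ℝ)) (x : Fin K → ℝ) :
    gamStack T A C Bs (fun m => εs m) *ᵥ x =
      fun mp => gamLinear T A C (εs mp.1) (Fintype.linearCombination ℝ Bs x) mp.2 := by
  ext ⟨m, p⟩
  rw [Fintype.linearCombination_apply, map_sum]
  simp [gamStack, mulVec, dotProduct, mul_comm]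

lemma ker_mulVecLin_gamStack (εs : ι → C(ℝ, Fin M → ℝ)) :
    LinearMap.ker (gamStack T A C Bs (fun m => εs m)).mulVecLin =
      ⨅ m, LinearMap.ker (gamLinear T A C (εs m) ∘ₗ Fintype.linearCombination ℝ Bs) := by
  ext x
  simp [Submodule.mem_iInf, gamStack_mulVec, funext_iff, Prod.forall]

lemma sum_dotProduct_mulVec_phiT_sub [Fintype ι] (εs : ι → C(ℝ, Fin M → ℝ)) (φ₀ : Fin N → ℝ)
    (α' α : Fin K → ℝ) :
    ∑ m, (C *ᵥ phiT T A φ₀ (∑ j, α' j • Bs j) (εs m) - C *ᵥ phiT T A φ₀ (∑ j, α j • Bs j) (εs m)) ⬝ᵥ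
        (C *ᵥ phiT T A φ₀ (∑ j, α' j • Bs j) (εs m) - C *ᵥ phiT T A φ₀ (∑ j, α j • Bs j) (εs m)) =
      star (α' - α) ⬝ᵥ ((∑ m, Wmat T A C Bs (εs m)) *ᵥ (α' - α)) := by
  have hdiff (m : ι) :
      C *ᵥ phiT T A φ₀ (∑ j, α' j • Bs j) (εs m) - C *ᵥ phiT T A φ₀ (∑ j, α j • Bs j) (εs m) =
        gamLinear T A C (εs m) (Fintype.linearCombination ℝ Bs (α' - α)) := by
    rw [mulVec_phiT, mulVec_phiT, add_sub_add_left_eq_sub, map_sub, map_sub,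
      Fintype.linearCombination_apply, Fintype.linearCombination_apply]
    rfl
  simp_rw [hdiff]
  rw [star_trivial, sum_Wmat_eq_transpose_mul, ← mulVec_mulVec, dotProduct_mulVec,
    vecMul_transpose, gamStack_mulVec]
  simp [dotProduct, Fintype.sum_prod_type]

lemma exists_ker_mulVecLin_gamStack_eq_bot {T : ℝ} (hT : 0 < T)
    (hli : LinearIndependent ℝ fun j => obsMat A C * Bs j) :
    ∃ εs : Fin K → C(ℝ, Fin M → ℝ),
      LinearMap.ker (gamStack T A C Bs (fun m => εs m)).mulVecLin = ⊥ := by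
  have hbot : ⨅ ε : C(ℝ, Fin M → ℝ),
      LinearMap.ker (gamLinear T A C ε ∘ₗ Fintype.linearCombination ℝ Bs) = ⊥ := by
    refine eq_bot_iff.2 fun x hx => ?_
    by_contra hx0
    have hB : obsMat A C * Fintype.linearCombination ℝ Bs x ≠ 0 := by
      rw [Fintype.linearCombination_apply, Matrix.mul_sum]
      simp_rw [Matrix.mul_smul]
      exact fun h => hx0 (funext (Fintype.linearIndependent_iff.1 hli x h))
    obtain ⟨ε, hε⟩ := exists_gam_ne_zero A C _ hT hB
    exact hε ((Submodule.mem_iInf _).1 hx ε)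
  have := Submodule.exists_fin_finrank_iInf_eq_bot _ hbot
  rw [Module.finrank_fin_fun] at this
  obtain ⟨εs, hεs⟩ := this
  exact ⟨εs, (ker_mulVecLin_gamStack T A C Bs εs).trans hεs⟩

end LeastSquares

theorem GR_convergence_observable_basis_general {N M P K : ℕ}
    (T : ℝ) (hT : 0 < T)
    (A : Matrix (Fin N) (Fin N) ℝ) (C : Matrix (Fin P) (Fin N) ℝ)
    (φ₀ : Fin N → ℝ)
    (Bs : Fin K → Matrix (Fin N) (Fin M) ℝ)
    (hli : LinearIndependent ℝ (fun j : Fin K => obsMat A C * Bs j)) :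
    ∃ ε : Fin K → ℝ → Fin M → ℝ,
      (∀ m, MemLp (ε m) 2 (volume.restrict (Set.Ioc (0:ℝ) T))) ∧
      (∑ m : Fin K, Wmat T A C Bs (ε m)).PosDef ∧
      ∀ αstar α : Fin K → ℝ, α ≠ αstar →
        0 < ∑ m : Fin K,
          (C.mulVec (phiT T A φ₀ (∑ j, αstar j • Bs j) (ε m)) -
              C.mulVec (phiT T A φ₀ (∑ j, α j • Bs j) (ε m))) ⬝ᵥ
            (C.mulVec (phiT T A φ₀ (∑ j, αstar j • Bs j) (ε m)) -
              C.mulVec (phiT T A φ₀ (∑ j, α j • Bs j) (ε m))) := by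
  obtain ⟨εs, hker⟩ := exists_ker_mulVecLin_gamStack_eq_bot A C Bs hT hli
  have hW : (∑ m, Wmat T A C Bs (εs m)).PosDef := by
    rw [sum_Wmat_eq_transpose_mul, ← conjTranspose_eq_transpose_of_trivial]
    exact PosDef.conjTranspose_mul_self _ (LinearMap.ker_eq_bot.1 hker)
  refine ⟨fun m => εs m, fun m => (εs m).continuous.memLp_restrict_Ioc 2 0 T, hW,
    fun αstar α hne => ?_⟩
  rw [sum_dotProduct_mulVec_phiT_sub]
  exact hW.dotProduct_mulVec_pos (sub_ne_zero.2 hne.symm)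

/-- if the matrices `𝒪_N(C,A) B_1, …, 𝒪_N(C,A) B_K` are linearly
independent, then there exist `L²` controls making `Ŵ = Σ_m W(ε^m)` positive definite;
consequently, for any `α⋆`, the least-squares problem is uniquely solvable with `α = α⋆`. -/
theorem GR_convergence_observable_basis {N M P K : ℕ}
    (hN : 0 < N) (hM : 0 < M) (hP : 0 < P) (hK : 0 < K)
    (T : ℝ) (hT : 0 < T)
    (A : Matrix (Fin N) (Fin N) ℝ) (C : Matrix (Fin P) (Fin N) ℝ)
    (φ₀ : Fin N → ℝ)
    (Bs : Fin K → Matrix (Fin N) (Fin M) ℝ)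
    (hli : LinearIndependent ℝ (fun j : Fin K => obsMat A C * Bs j)) :
    ∃ ε : Fin K → ℝ → Fin M → ℝ,
      (∀ m, MemLp (ε m) 2 (volume.restrict (Set.Ioc (0:ℝ) T))) ∧
      (∑ m : Fin K, Wmat T A C Bs (ε m)).PosDef ∧
      ∀ αstar α : Fin K → ℝ, α ≠ αstar →
        0 < ∑ m : Fin K,
          (C.mulVec (phiT T A φ₀ (∑ j, αstar j • Bs j) (ε m)) -
              C.mulVec (phiT T A φ₀ (∑ j, α j • Bs j) (ε m))) ⬝ᵥ
            (C.mulVec (phiT T A φ₀ (∑ j, αstar j • Bs j) (ε m)) -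
              C.mulVec (phiT T A φ₀ (∑ j, α j • Bs j) (ε m))) :=
  GR_convergence_observable_basis_general T hT A C φ₀ Bs hli
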